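/- arXiv:1207.0850 — 2 statements merged into one kernel-verified Lean document; each statement's English description precedes it below -/
import Mathlib

section
/- Let Y ∈ gl_M(F_p) have irreducible characteristic polynomial, let ψ be a nontrivial additive character of F_p, and define ψ_Y : sl_M(F_p) → ℂ× by ψ_Y(X) = ψ(tr(XY)). Then for any X ∈ sl_M(F_p) and any unipotent radical n of a proper parabolic subalgebra p ⊊ gl_M(F_p), the sum ∑_{N ∈ n} ψ_Y(X + N) equals zero. -/
/-!
An endomorphism with irreducible characteristic polynomial has no invariant subspaces other than
`0` and the whole space: for `u ≠ 0` the annihilator of `u` in `K[X]` is generated by the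
characteristic polynomial, so `u, Yu, …, Y^(M-1) u` are independent and lie in every invariant
subspace containing `u`. Hence `Y u ∉ W₁` for some `u ∈ W₁`. A functional `w` vanishing on `W₁`
with `w (Y u) = 1` gives the rank-one element `N₀ = u wᵀ` of the nilradical with
`tr (N₀ Y) = 1`, so `N ↦ ψ (tr (N Y))` is a nontrivial character of the nilradical and its sum
vanishes; the sum in question is `ψ (tr (X Y))` times that one.
-/

open scoped Classical

open Polynomial

namespace Module.End

variable {K V : Type*} [Field K] [AddCommGroup V] [Module K V] [FiniteDimensional K V]
  {f : End K V}

theorem charpoly_dvd_of_aeval_apply_eq_zero (hf : Irreducible f.charpoly) {u : V} (hu : u ≠ 0)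
    {q : K[X]} (hq : aeval f q u = 0) : f.charpoly ∣ q := by
  by_contra hdvd
  obtain ⟨a, b, hab⟩ := hf.coprime_iff_not_dvd.mpr hdvd
  have hone := congrArg (fun g : K[X] => aeval f g u) hab
  simp only [map_add, map_mul, LinearMap.aeval_self_charpoly, mul_zero, zero_add, map_one,
    Module.End.mul_apply, hq, map_zero, Module.End.one_apply] at hone
  exact hu hone.symm

theorem eq_bot_or_eq_top_of_mem_invtSubmodule (hf : Irreducible f.charpoly) {W : Submodule K V}
    (hW : W ∈ f.invtSubmodule) : W = ⊥ ∨ W = ⊤ := by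
  refine or_iff_not_imp_left.mpr fun hbot => ?_
  obtain ⟨u, hu, hu0⟩ := W.ne_bot_iff.mp hbot
  let L : degreeLT K (finrank K V) →ₗ[K] W :=
    ((LinearMap.applyₗ u ∘ₗ (aeval f).toLinearMap) ∘ₗ (degreeLT K _).subtype).codRestrict W
      fun q => aeval_apply_smul_mem_of_le_comap hu q f (f.mem_invtSubmodule.mp hW)
  have hL : Function.Injective L := by
    refine (injective_iff_map_eq_zero L).mpr fun ⟨q, hq⟩ hLq => ?_
    have hdvd := charpoly_dvd_of_aeval_apply_eq_zero hf hu0 (congrArg Subtype.val hLq)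
    have hdeg : q.degree < f.charpoly.degree := by
      rw [mem_degreeLT] at hq
      rwa [degree_eq_natDegree f.charpoly_monic.ne_zero, LinearMap.charpoly_natDegree]
    simpa using eq_zero_of_dvd_of_degree_lt hdvd hdeg
  apply Submodule.eq_top_of_finrank_eq
  refine le_antisymm W.finrank_le ?_
  simpa [(degreeLTEquiv K _).finrank_eq] using LinearMap.finrank_le_finrank_of_injective hL

end Module.End

namespace Matrix

variable {K : Type*} [Field K] {n : Type*} [Fintype n]

theorem exists_mulVec_notMem_of_irreducible_charpoly [DecidableEq n] {Y : Matrix n n K}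
    (hY : Irreducible Y.charpoly) {W : Submodule K (n → K)} (hbot : W ≠ ⊥) (htop : W ≠ ⊤) :
    ∃ u ∈ W, Y *ᵥ u ∉ W := by
  by_contra! hinv
  rw [← charpoly_mulVecLin] at hY
  exact (Module.End.eq_bot_or_eq_top_of_mem_invtSubmodule hY hinv).elim hbot htop

theorem exists_dotProduct_eq_one_of_notMem {S : Submodule K (n → K)} {x : n → K} (hx : x ∉ S) :
    ∃ w : n → K, (∀ v ∈ S, w ⬝ᵥ v = 0) ∧ w ⬝ᵥ x = 1 := by
  obtain ⟨f, hfx, hfS⟩ := S.exists_dual_map_eq_bot_of_notMem hx inferInstance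
  have hdot (g : Module.Dual K (n → K)) (y : n → K) : (dotProductEquiv K n).symm g ⬝ᵥ y = g y :=
    LinearMap.congr_fun ((dotProductEquiv K n).apply_symm_apply g) y
  refine ⟨(dotProductEquiv K n).symm ((f x)⁻¹ • f), fun v hv => ?_, ?_⟩
  · rw [hdot, LinearMap.smul_apply, LinearMap.mem_ker.mp (LinearMap.le_ker_iff_map.mpr hfS hv),
      smul_zero]
  · rw [hdot, LinearMap.smul_apply, smul_eq_mul, inv_mul_cancel₀ hfx]

variable (K) in
def flagNilradical {k : ℕ} (W : Fin (k + 1) → Submodule K (n → K)) :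
    Submodule K (Matrix n n K) where
  carrier := {N | ∀ i : Fin k, ∀ v ∈ W i.succ, N *ᵥ v ∈ W i.castSucc}
  add_mem' hN hN' i v hv := by
    rw [add_mulVec]; exact add_mem (hN i v hv) (hN' i v hv)
  zero_mem' i v _ := by rw [zero_mulVec]; exact zero_mem _
  smul_mem' c N hN i v hv := by rw [smul_mulVec]; exact Submodule.smul_mem _ c (hN i v hv)

theorem vecMulVec_mem_flagNilradical {k : ℕ} {W : Fin (k + 2) → Submodule K (n → K)}
    (hW : Monotone W) {u w : n → K} (hu : u ∈ W 1) (hw : ∀ v ∈ W 1, w ⬝ᵥ v = 0) :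
    vecMulVec u w ∈ flagNilradical K W := by
  intro i v hv
  rw [vecMulVec_mulVec, op_smul_eq_smul]
  induction i using Fin.cases with
  | zero => simp [hw v hv]
  | succ j =>
    have h1 : (1 : Fin (k + 2)) ≤ j.succ.castSucc := by simp [Fin.le_def]
    exact Submodule.smul_mem _ _ (hW h1 hu)

theorem exists_mem_flagNilradical_trace_mul_eq_one {k : ℕ}
    {W : Fin (k + 2) → Submodule K (n → K)} (hW : Monotone W) {Y : Matrix n n K} {u : n → K}
    (hu : u ∈ W 1) (hYu : Y *ᵥ u ∉ W 1) :
    ∃ N ∈ flagNilradical K W, (N * Y).trace = 1 := by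
  obtain ⟨w, hw, hwYu⟩ := exists_dotProduct_eq_one_of_notMem hYu
  refine ⟨vecMulVec u w, vecMulVec_mem_flagNilradical hW hu hw, ?_⟩
  rw [vecMulVec_mul, trace_vecMulVec, dotProduct_comm, ← dotProduct_mulVec, hwYu]

theorem sum_addChar_trace_add_mul_eq_zero {R S : Type*} [CommRing R] [IsDomain R] [CommRing S]
    {ψ : AddChar S R} (hψ : ψ ≠ 1) {P : Submodule S (Matrix n n S)} [Fintype P]
    {Y : Matrix n n S} (hP : ∃ N ∈ P, (N * Y).trace = 1) (X : Matrix n n S) :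
    ∑ N : P, ψ (((X + N) * Y).trace) = 0 := by
  obtain ⟨N₀, hN₀, hN₀Y⟩ := hP
  obtain ⟨t, ht⟩ := AddChar.ne_one_iff.mp hψ
  let traceMulY : P →+ S :=
    (traceAddMonoidHom n S).comp ((AddMonoidHom.mulRight Y).comp P.subtype.toAddMonoidHom)
  have hψY : ψ.compAddMonoidHom traceMulY ≠ 1 :=
    AddChar.ne_one_iff.mpr ⟨t • ⟨N₀, hN₀⟩, by simpa [traceMulY, hN₀Y] using ht⟩
  simp only [add_mul, trace_add, AddChar.map_add_eq_mul, ← Finset.mul_sum]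
  exact mul_eq_zero_of_right _ (AddChar.sum_eq_zero_of_ne_one hψY)

end Matrix

theorem sum_psiY_over_nilradical_eq_zero_general (p M r : ℕ) [Fact p.Prime] (hr : 1 ≤ r)
    (ψ : AddChar (ZMod p) ℂ) (hψ : ψ ≠ 1)
    (Y : Matrix (Fin M) (Fin M) (ZMod p)) (hY : Irreducible Y.charpoly)
    (X : Matrix (Fin M) (Fin M) (ZMod p))
    (W : Fin (r + 2) → Submodule (ZMod p) (Fin M → ZMod p))
    (hmono : StrictMono W) (h0 : W 0 = ⊥) (htop : W (Fin.last (r + 1)) = ⊤) :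
    ∑ N ∈ Finset.univ.filter
        (fun N : Matrix (Fin M) (Fin M) (ZMod p) =>
          ∀ i : Fin (r + 1), ∀ v ∈ W i.succ, N.mulVec v ∈ W i.castSucc),
      ψ (((X + N) * Y).trace) = 0 := by
  have : NeZero r := ⟨by omega⟩
  obtain ⟨u, hu, hYu⟩ := Matrix.exists_mulVec_notMem_of_irreducible_charpoly hY
    (h0 ▸ (hmono Fin.zero_lt_one).ne') (htop ▸ (hmono Fin.one_lt_last).ne)
  rw [Finset.sum_subtype (p := (· ∈ Matrix.flagNilradical (ZMod p) W)) _ fun _ => ?mem]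
  case mem => exact Finset.mem_filter_univ _
  exact Matrix.sum_addChar_trace_add_mul_eq_zero hψ
    (Matrix.exists_mem_flagNilradical_trace_mul_eq_one hmono.monotone hu hYu) X

/-- Let `Y ∈ gl_M(F_p)` have irreducible characteristic polynomial, `ψ` a
nontrivial additive character of `F_p`, and `ψ_Y(X) = ψ(tr(XY))`.  For any
trace-zero `X` and the nilpotent radical `n` of a proper parabolic subalgebra
of `gl_M(F_p)` (the stabilizer of a nontrivial flag `W`), the sum
`∑_{N ∈ n} ψ_Y(X + N)` vanishes. -/
theorem sum_psiY_over_nilradical_eq_zero (p M r : ℕ) [Fact p.Prime] (hr : 1 ≤ r)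
    (ψ : AddChar (ZMod p) ℂ) (hψ : ψ ≠ 1)
    (Y : Matrix (Fin M) (Fin M) (ZMod p)) (hY : Irreducible Y.charpoly)
    (X : Matrix (Fin M) (Fin M) (ZMod p)) (hX : X.trace = 0)
    (W : Fin (r + 2) → Submodule (ZMod p) (Fin M → ZMod p))
    (hmono : StrictMono W) (h0 : W 0 = ⊥) (htop : W (Fin.last (r + 1)) = ⊤) :
    ∑ N ∈ Finset.univ.filter
        (fun N : Matrix (Fin M) (Fin M) (ZMod p) =>
          ∀ i : Fin (r + 1), ∀ v ∈ W i.succ, N.mulVec v ∈ W i.castSucc),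
      ψ (((X + N) * Y).trace) = 0 :=
  sum_psiY_over_nilradical_eq_zero_general p M r hr ψ hψ Y hY X W hmono h0 htop
end

section
/- If m divides n strongly (i.e., m | n and every prime dividing n also divides m), then Γ₁(n) is a normal subgroup of Γ₁(m). -/
/-!
Fix a prime `p ∣ n` with `e = vₚ(n)`. Membership of `h` in `Γ₁(pᵉ)` says that all entries of
`h - 1` are divisible by `pᵉ⁻¹` and those on or below the diagonal by `pᵉ`. Since `p ∣ m`, an
element `g ∈ Γ₁(m)` is upper triangular modulo `p`, and so is `g⁻¹`. Multiplying such a matrix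
`X` on either side by a matrix that is upper triangular mod `p` preserves this divisibility
pattern: a product term that leaves the lower triangle of `X` picks up a factor `p` from the
triangular factor. Hence `g (h - 1) g⁻¹ = g h g⁻¹ - 1` has the same pattern.
-/

/-- Membership in `Γ₁(n) = ∩_{p^e ∥ n} Γ₁(p^e)`. -/
def Gamma1Mem (M n : ℕ) (g : Matrix.SpecialLinearGroup (Fin M) ℤ) : Prop :=
  ∀ p : ℕ, p.Prime → p ∣ n →
    (∀ i j : Fin M, i < j → ((p : ℤ) ^ (n.factorization p - 1)) ∣ g.1 i j) ∧
    (∀ i j : Fin M, j ≤ i →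
      ((p : ℤ) ^ (n.factorization p)) ∣ (g.1 i j - if i = j then 1 else 0))

namespace Matrix

variable {ι R : Type*} [Fintype ι] [LinearOrder ι]

structure IsDvdLower [CommSemiring R] (d d' : R) (X : Matrix ι ι R) : Prop where
  dvd : ∀ i j, d ∣ X i j
  dvd_of_le : ∀ i j, j ≤ i → d' ∣ X i j

namespace IsDvdLower

variable [CommSemiring R] {p d d' : R} {U X : Matrix ι ι R}

theorem mul_left (hX : IsDvdLower d d' X) (hU : ∀ i k, k < i → p ∣ U i k)
    (hd' : d' ∣ p * d) : IsDvdLower d d' (U * X) where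
  dvd i j := Finset.dvd_sum fun k _ => (hX.dvd k j).mul_left _
  dvd_of_le i j hji := Finset.dvd_sum fun k _ => by
    rcases le_or_gt j k with hjk | hkj
    · exact (hX.dvd_of_le k j hjk).mul_left _
    · exact hd'.trans (mul_dvd_mul (hU i k (hkj.trans_le hji)) (hX.dvd k j))

theorem mul_right (hX : IsDvdLower d d' X) (hU : ∀ k j, j < k → p ∣ U k j)
    (hd' : d' ∣ p * d) : IsDvdLower d d' (X * U) where
  dvd i j := Finset.dvd_sum fun k _ => (hX.dvd i k).mul_right _
  dvd_of_le i j hji := Finset.dvd_sum fun k _ => by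
    rcases le_or_gt k i with hki | hik
    · exact (hX.dvd_of_le i k hki).mul_right _
    · rw [mul_comm p] at hd'
      exact hd'.trans (mul_dvd_mul (hX.dvd i k) (hU k j (hji.trans_lt hik)))

end IsDvdLower

namespace SpecialLinearGroup

variable [CommRing R] {p : R} {g : SpecialLinearGroup ι R}

theorem blockTriangular_inv {α : Type*} [LinearOrder α] {b : ι → α}
    (hg : (g : Matrix ι ι R).BlockTriangular b) :
    ((g⁻¹ : SpecialLinearGroup ι R) : Matrix ι ι R).BlockTriangular b := by
  have hmul : (g : Matrix ι ι R) * ((g⁻¹ : SpecialLinearGroup ι R) : Matrix ι ι R) = 1 := by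
    rw [← coe_mul, mul_inv_cancel, coe_one]
  have := invertibleOfRightInverse _ _ hmul
  simpa only [inv_eq_right_inv hmul] using blockTriangular_inv_of_blockTriangular hg

theorem dvd_inv_apply_of_lt (hg : ∀ i j, j < i → p ∣ (g : Matrix ι ι R) i j) {i j : ι}
    (hji : j < i) : p ∣ ((g⁻¹ : SpecialLinearGroup ι R) : Matrix ι ι R) i j := by
  have hgbar : ((map (Ideal.Quotient.mk (Ideal.span {p})) g : SpecialLinearGroup ι _) :
      Matrix ι ι (R ⧸ Ideal.span {p})).BlockTriangular id :=
    fun a b hab => (Ideal.Quotient.eq_zero_iff_dvd _ _).mpr (hg a b hab)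
  have hzero := blockTriangular_inv hgbar hji
  rw [← map_inv] at hzero
  exact (Ideal.Quotient.eq_zero_iff_dvd _ _).mp hzero

theorem coe_conj_sub_one (g h : SpecialLinearGroup ι R) :
    ((g * h * g⁻¹ : SpecialLinearGroup ι R) : Matrix ι ι R) - 1 =
      (g : Matrix ι ι R) * (h - 1) * (g⁻¹ : SpecialLinearGroup ι R) := by
  rw [Matrix.mul_sub, Matrix.sub_mul, Matrix.mul_one, ← coe_mul g g⁻¹, mul_inv_cancel,
    coe_one, coe_mul, coe_mul]

end SpecialLinearGroup

theorem IsDvdLower.conj [CommRing R] {p d d' : R} {g : SpecialLinearGroup ι R}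
    {X : Matrix ι ι R} (hX : IsDvdLower d d' X) (hg : ∀ i j, j < i → p ∣ (g : Matrix ι ι R) i j)
    (hd' : d' ∣ p * d) :
    IsDvdLower d d' ((g : Matrix ι ι R) * X * ((g⁻¹ : SpecialLinearGroup ι R) : Matrix ι ι R)) :=
  (hX.mul_left hg hd').mul_right (fun _ _ => SpecialLinearGroup.dvd_inv_apply_of_lt hg) hd'

end Matrix

open Matrix

theorem gamma1Mem_iff {M n : ℕ} {g : SpecialLinearGroup (Fin M) ℤ} :
    Gamma1Mem M n g ↔ ∀ p : ℕ, p.Prime → p ∣ n →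
      IsDvdLower ((p : ℤ) ^ (n.factorization p - 1)) ((p : ℤ) ^ n.factorization p)
        ((g : Matrix (Fin M) (Fin M) ℤ) - 1) := by
  have hpow (p : ℕ) : (p : ℤ) ^ (n.factorization p - 1) ∣ (p : ℤ) ^ n.factorization p :=
    pow_dvd_pow _ (Nat.sub_le _ _)
  refine forall₃_congr fun p _ _ => ⟨fun ⟨hup, hlow⟩ => ⟨fun i j => ?_, ?_⟩, fun h => ⟨?_, ?_⟩⟩
  · rcases lt_or_ge i j with hij | hji
    · simpa [one_apply, hij.ne] using hup i j hij
    · simpa [one_apply] using (hpow p).trans (hlow i j hji)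
  · simpa [one_apply] using hlow
  · intro i j hij
    simpa [one_apply, hij.ne] using h.dvd i j
  · simpa [one_apply] using h.dvd_of_le

theorem Gamma1Mem.prime_dvd_apply_of_lt {M m p : ℕ} {g : SpecialLinearGroup (Fin M) ℤ}
    (hg : Gamma1Mem M m g) (hp : p.Prime) (hpm : p ∣ m) (hm : m ≠ 0) {i j : Fin M}
    (hji : j < i) : (p : ℤ) ∣ g.1 i j := by
  have := (hg p hp hpm).2 i j hji.le
  rw [if_neg hji.ne', sub_zero] at this
  exact (dvd_pow_self _ (hp.factorization_pos_of_dvd hm hpm).ne').trans this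

/-- If `m` divides `n` strongly (`m ∣ n` and every prime dividing `n` divides
`m`), then `Γ₁(n)` is a normal subgroup of `Γ₁(m)`. -/
theorem Gamma1_strong_divide_normal (M m n : ℕ) (hn : 0 < n) (hmn : m ∣ n)
    (hrad : ∀ p : ℕ, p.Prime → p ∣ n → p ∣ m)
    (g h : Matrix.SpecialLinearGroup (Fin M) ℤ)
    (hg : Gamma1Mem M m g) (hh : Gamma1Mem M n h) :
    Gamma1Mem M n (g * h * g⁻¹) := by
  have hm : m ≠ 0 := ne_zero_of_dvd_ne_zero hn.ne' hmn
  rw [gamma1Mem_iff] at hh ⊢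
  intro p hp hpn
  rw [SpecialLinearGroup.coe_conj_sub_one]
  refine (hh p hp hpn).conj (fun i j => hg.prime_dvd_apply_of_lt hp (hrad p hp hpn) hm) ?_
  rw [← pow_succ']
  exact pow_dvd_pow _ (by omega)
end
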